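/- For a positive integer m, nonzero real λ, and nonnegative integers n, k with k ≤ n, W_{m,λ}(n,k) = ∑_{i=k}^{n} C(n,i)·m^{i−k}·(1)_{n−i,λ}·S_{2,λ/m}(i,k), where W_{m,λ} are the degenerate Whitney numbers of the second kind and S_{2,λ/m} are the degenerate Stirling numbers of the second kind with parameter λ/m. -/
import Mathlib

open Finset

noncomputable def dff (lam x : ℝ) (n : ℕ) : ℝ := ∏ i ∈ Finset.range n, (x - i * lam)

noncomputable def drf (lam x : ℝ) (n : ℕ) : ℝ := ∏ i ∈ Finset.range n, (x + i * lam)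

lemma dff_zero (lam x : ℝ) : dff lam x 0 = 1 := by simp [dff]

lemma dff_succ (lam x : ℝ) (n : ℕ) : dff lam x (n+1) = dff lam x n * (x - n * lam) := by
  simp [dff, Finset.prod_range_succ]

lemma dff_vandermonde (lam x y : ℝ) (n : ℕ) :
    dff lam (x + y) n =
      ∑ i ∈ Finset.range (n + 1), (n.choose i : ℝ) * dff lam x i * dff lam y (n - i) := by
  induction n with
  | zero => simp [dff]
  | succ n ih =>
    rw [dff_succ, ih, Finset.sum_mul]
    have key : ∀ i ∈ Finset.range (n + 1),
        (n.choose i : ℝ) * dff lam x i * dff lam y (n - i) * (x + y - n * lam) =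
        (n.choose i : ℝ) * dff lam x (i+1) * dff lam y (n - i)
        + (n.choose i : ℝ) * dff lam x i * dff lam y (n - i + 1) := by
      intro i hi
      rw [Finset.mem_range] at hi
      have hin : i ≤ n := Nat.lt_succ_iff.mp hi
      have hxy : x + y - n * lam = (x - i * lam) + (y - (n - i : ℕ) * lam) := by
        have : ((n - i : ℕ) : ℝ) = (n : ℝ) - i := by
          push_cast [Nat.cast_sub hin]; ring
        rw [this]; ring
      rw [hxy, dff_succ, dff_succ]; ring
    rw [Finset.sum_congr rfl key, Finset.sum_add_distrib]
    rw [Finset.sum_range_succ' (fun j => ((n+1).choose j : ℝ) * dff lam x j * dff lam y (n + 1 - j))]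
    have h1 : ∑ i ∈ Finset.range (n + 1),
        (n.choose i : ℝ) * dff lam x (i + 1) * dff lam y (n - i) =
        ∑ i ∈ Finset.range (n + 1),
        (n.choose i : ℝ) * dff lam x (i + 1) * dff lam y (n + 1 - (i + 1)) := by
      apply Finset.sum_congr rfl; intro i hi; rw [Nat.succ_sub_succ]
    have h2 : ∑ i ∈ Finset.range (n + 1),
        (n.choose i : ℝ) * dff lam x i * dff lam y (n - i + 1) =
        (∑ i ∈ Finset.range (n+1),
          (n.choose (i+1) : ℝ) * dff lam x (i+1) * dff lam y (n + 1 - (i + 1))) +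
        dff lam y (n + 1) := by
      rw [Finset.sum_range_succ'
        (fun i => (n.choose i : ℝ) * dff lam x i * dff lam y (n - i + 1))]
      simp only [Nat.choose_zero_right, Nat.cast_one, dff_zero, Nat.sub_zero, one_mul, mul_one]
      congr 1
      rw [Finset.sum_range_succ, Nat.choose_succ_self]
      simp only [Nat.cast_zero, zero_mul, add_zero]
      apply Finset.sum_congr rfl; intro i hi
      rw [Finset.mem_range] at hi
      congr 2
      omega
    rw [h1, h2]
    simp only [Nat.choose_zero_right, Nat.cast_one, dff_zero, Nat.sub_zero, one_mul, mul_one]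
    rw [← add_assoc, ← Finset.sum_add_distrib]
    congr 1
    apply Finset.sum_congr rfl; intro i hi
    rw [Nat.choose_succ_succ, Nat.cast_add]
    ring

lemma dff_one_nat (j : ℕ) (k : ℕ) : dff 1 (j : ℝ) k = (j.descFactorial k : ℝ) := by
  induction k with
  | zero => simp [dff]
  | succ k ih =>
    rw [dff_succ, ih, Nat.descFactorial_succ]
    by_cases h : k < j
    · push_cast [Nat.cast_sub (le_of_lt h)]
      ring
    · push_neg at h
      rcases eq_or_lt_of_le h with h' | h'
      · subst h'; simp
      · rw [Nat.descFactorial_eq_zero_iff_lt.mpr h']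
        simp

lemma dff_lin_indep (N : ℕ) (a : ℕ → ℝ)
    (h : ∀ x : ℝ, ∑ k ∈ Finset.range N, a k * dff 1 x k = 0) :
    ∀ k, k < N → a k = 0 := by
  intro k
  induction k using Nat.strong_induction_on with
  | _ k ih =>
    intro hk
    have hx := h (k : ℝ)
    have hsplit : ∑ j ∈ Finset.range N, a j * dff 1 (k : ℝ) j =
        ∑ j ∈ Finset.range (k+1), a j * dff 1 (k : ℝ) j := by
      rw [← Finset.sum_range_add_sum_Ico _ (Nat.succ_le_of_lt hk)]
      have hz : ∑ j ∈ Finset.Ico (k+1) N, a j * dff 1 (k : ℝ) j = 0 := by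
        apply Finset.sum_eq_zero
        intro j hj
        rw [Finset.mem_Ico] at hj
        rw [dff_one_nat, Nat.descFactorial_eq_zero_iff_lt.mpr hj.1]
        simp
      rw [hz, add_zero]
    rw [hsplit, Finset.sum_range_succ] at hx
    have hzero : ∑ j ∈ Finset.range k, a j * dff 1 (k : ℝ) j = 0 := by
      apply Finset.sum_eq_zero
      intro j hj
      rw [Finset.mem_range] at hj
      rw [ih j hj (lt_trans hj hk)]; ring
    rw [hzero, zero_add] at hx
    have hne : dff 1 (k : ℝ) k ≠ 0 := by
      rw [dff_one_nat, Nat.descFactorial_self]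
      exact Nat.cast_ne_zero.mpr (Nat.factorial_ne_zero k)
    exact (mul_eq_zero.mp hx).resolve_right hne

theorem stmt10 (m : ℕ) (hm : 1 ≤ m) (lam : ℝ) (hlam : lam ≠ 0) (W S2m : ℕ → ℕ → ℝ)
    (hW : ∀ (x : ℝ) (n : ℕ), dff lam ((m : ℝ) * x + 1) n =
      ∑ k ∈ Finset.range (n + 1), W n k * (m : ℝ) ^ k * dff 1 x k)
    (hS2m : ∀ (x : ℝ) (n : ℕ), dff (lam / m) x n =
      ∑ k ∈ Finset.range (n + 1), S2m n k * dff 1 x k)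
    (n k : ℕ) (hk : k ≤ n) :
    W n k = ∑ i ∈ Finset.Icc k n, (Nat.choose n i : ℝ) * (m : ℝ) ^ (i - k) *
      dff lam 1 (n - i) * S2m i k := by
  have hm0 : (m : ℝ) ≠ 0 := by positivity
  set c : ℕ → ℝ := fun j =>
    ∑ i ∈ Finset.Icc j n, (n.choose i : ℝ) * (m : ℝ) ^ i * dff lam 1 (n - i) * S2m i j with hc
  have key : ∀ x : ℝ, dff lam ((m : ℝ) * x + 1) n =
      ∑ j ∈ Finset.range (n + 1), c j * dff 1 x j := by
    intro x
    rw [dff_vandermonde lam ((m:ℝ)*x) 1 n]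
    have hmx : ∀ i : ℕ, dff lam ((m : ℝ) * x) i = (m:ℝ)^i * dff (lam / m) x i := by
      intro i
      rw [dff, dff]
      rw [show ∏ j ∈ Finset.range i, ((m:ℝ) * x - j * lam)
          = ∏ j ∈ Finset.range i, ((m:ℝ) * (x - j * (lam / m))) from
        Finset.prod_congr rfl (fun j _ => by field_simp)]
      rw [Finset.prod_mul_distrib, Finset.prod_const, Finset.card_range]
    have step : ∀ i ∈ Finset.range (n+1),
        (n.choose i : ℝ) * dff lam ((m:ℝ)*x) i * dff lam 1 (n - i) =
        ∑ j ∈ Finset.range (i+1),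
          ((n.choose i : ℝ) * (m:ℝ)^i * dff lam 1 (n - i) * S2m i j) * dff 1 x j := by
      intro i _
      rw [hmx i, hS2m x i]
      simp only [Finset.mul_sum, Finset.sum_mul]
      apply Finset.sum_congr rfl
      intro j _
      ring
    rw [Finset.sum_congr rfl step]
    rw [Finset.sum_comm' (t' := Finset.range (n+1)) (s' := fun j => Finset.Icc j n)
      (by intro i j; simp only [Finset.mem_range, Finset.mem_Icc]; omega)]
    apply Finset.sum_congr rfl
    intro j _
    rw [hc]
    simp only
    rw [Finset.sum_mul]
  have hcoeff : ∀ j, j < n + 1 → W n j * (m:ℝ)^j - c j = 0 := by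
    apply dff_lin_indep
    intro x
    have h1 := hW x n
    have h2 := key x
    rw [h1] at h2
    have : ∑ j ∈ Finset.range (n+1), (W n j * (m:ℝ)^j - c j) * dff 1 x j
        = ∑ j ∈ Finset.range (n+1), W n j * (m:ℝ)^j * dff 1 x j
          - ∑ j ∈ Finset.range (n+1), c j * dff 1 x j := by
      rw [← Finset.sum_sub_distrib]
      apply Finset.sum_congr rfl
      intro j _; ring
    rw [this, h2, sub_self]
  have hW' : W n k * (m:ℝ)^k = c k := by
    have := hcoeff k (Nat.lt_succ_of_le hk)
    linarith
  have hRHS : (∑ i ∈ Finset.Icc k n, (n.choose i : ℝ) * (m : ℝ) ^ (i - k) *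
      dff lam 1 (n - i) * S2m i k) * (m:ℝ)^k = c k := by
    rw [hc]
    simp only
    rw [Finset.sum_mul]
    apply Finset.sum_congr rfl
    intro i hi
    rw [Finset.mem_Icc] at hi
    have : (m:ℝ) ^ (i - k) * (m:ℝ)^k = (m:ℝ)^i := by
      rw [← pow_add, Nat.sub_add_cancel hi.1]
    calc (n.choose i : ℝ) * (m:ℝ)^(i-k) * dff lam 1 (n-i) * S2m i k * (m:ℝ)^k
        = (n.choose i : ℝ) * ((m:ℝ)^(i-k) * (m:ℝ)^k) * dff lam 1 (n-i) * S2m i k := by ring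
      _ = (n.choose i : ℝ) * (m:ℝ)^i * dff lam 1 (n-i) * S2m i k := by rw [this]
  have hpk : ((m:ℝ)^k) ≠ 0 := pow_ne_zero k hm0
  apply mul_right_cancel₀ hpk
  rw [hW', hRHS]
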